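/- arXiv:1110.4278 — 5 statements merged into one kernel-verified Lean document; each statement's English description precedes it below -/
import Mathlib

section
/- The unique minimizer of the generalized semi-supervised learning objective is given columnwise by F_{·k} = (μ/(2+μ)) (I − (2/(2+μ)) D^{−σ} W D^{σ−1})^{−1} Y_{·k}, assuming the matrix I − (2/(2+μ)) D^{−σ} W D^{σ−1} is invertible. -/
/-!
The objective is a quadratic function of `F`: with `Q₀` the objective for `Y = 0`,
`Q (F + H) = Q F + ⟪∇Q F, H⟫ + Q₀ H`, where the cross term of the smoothness part is computed
through the symmetry of `W` as a pairing with the graph Laplacian `D - W`. Multiplying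
`M F = μ/(2+μ) Y` on the left by `(2+μ) D^σ` turns it into `∇Q F = 0`, and `Q₀ H > 0` for
`H ≠ 0` because the fitting weights `μ d_i^(2σ-1)` are positive.
-/

open Matrix Finset

variable {ι κ : Type*} [Fintype ι]

section Objective

variable [Fintype κ]

def graphObjective (W : Matrix ι ι ℝ) (s c : ι → ℝ) (μ : ℝ) (Y F : Matrix ι κ ℝ) : ℝ :=
  (∑ i, ∑ j, W i j * ∑ k, (s i * F i k - s j * F j k) ^ 2) + μ * ∑ i, c i * ∑ k, (F i k - Y i k) ^ 2

lemma graphObjective_nonneg {W : Matrix ι ι ℝ} (hW : ∀ i j, 0 ≤ W i j) {c : ι → ℝ}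
    (hc : ∀ i, 0 ≤ c i) (s : ι → ℝ) {μ : ℝ} (hμ : 0 ≤ μ) (Y F : Matrix ι κ ℝ) :
    0 ≤ graphObjective W s c μ Y F := by
  unfold graphObjective
  exact add_nonneg
    (sum_nonneg fun i _ => sum_nonneg fun j _ =>
      mul_nonneg (hW i j) (sum_nonneg fun k _ => sq_nonneg _))
    (mul_nonneg hμ (sum_nonneg fun i _ => mul_nonneg (hc i) (sum_nonneg fun k _ => sq_nonneg _)))

lemma eq_of_graphObjective_eq_zero {W : Matrix ι ι ℝ} (hW : ∀ i j, 0 ≤ W i j) {c : ι → ℝ}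
    (hc : ∀ i, 0 < c i) (s : ι → ℝ) {μ : ℝ} (hμ : 0 < μ) {Y F : Matrix ι κ ℝ}
    (h : graphObjective W s c μ Y F = 0) : F = Y := by
  have hsmooth : 0 ≤ ∑ i, ∑ j, W i j * ∑ k, (s i * F i k - s j * F j k) ^ 2 :=
    sum_nonneg fun i _ => sum_nonneg fun j _ =>
      mul_nonneg (hW i j) (sum_nonneg fun k _ => sq_nonneg _)
  have hfit : 0 ≤ ∑ i, c i * ∑ k, (F i k - Y i k) ^ 2 :=
    sum_nonneg fun i _ => mul_nonneg (hc i).le (sum_nonneg fun k _ => sq_nonneg _)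
  have hfit0 : ∑ i, c i * ∑ k, (F i k - Y i k) ^ 2 = 0 :=
    (mul_eq_zero.mp ((add_eq_zero_iff_of_nonneg hsmooth (mul_nonneg hμ.le hfit)).mp h).2
      ).resolve_left hμ.ne'
  ext i k
  have hrow : ∑ k, (F i k - Y i k) ^ 2 = 0 :=
    (mul_eq_zero.mp ((sum_eq_zero_iff_of_nonneg fun i _ =>
      mul_nonneg (hc i).le (sum_nonneg fun k _ => sq_nonneg _)).mp hfit0 i (mem_univ i))
      ).resolve_left (hc i).ne'
  have hentry := (sum_eq_zero_iff_of_nonneg fun k _ => sq_nonneg _).mp hrow k (mem_univ k)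
  exact sub_eq_zero.mp (pow_eq_zero_iff two_ne_zero |>.mp hentry)

end Objective

section Laplacian

variable [DecidableEq ι]

def graphLaplacian (W : Matrix ι ι ℝ) : Matrix ι ι ℝ :=
  diagonal (fun i => ∑ j, W i j) - W

lemma graphLaplacian_mul_apply (W : Matrix ι ι ℝ) (u : Matrix ι κ ℝ) (i : ι) (k : κ) :
    (graphLaplacian W * u) i k = (∑ j, W i j) * u i k - ∑ j, W i j * u j k := by
  rw [graphLaplacian, Matrix.sub_mul, Matrix.sub_apply, diagonal_mul, mul_apply]

lemma sum_weighted_diff_mul_diff_eq_graphLaplacian [Fintype κ] {W : Matrix ι ι ℝ} (hW : W.IsSymm)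
    (u v : Matrix ι κ ℝ) :
    ∑ i, ∑ j, W i j * ∑ k, (u i k - u j k) * (v i k - v j k) =
      2 * ∑ i, ∑ k, v i k * (graphLaplacian W * u) i k := by
  have hswap : ∑ i, ∑ j, W i j * ∑ k, v j k * (u i k - u j k) =
      -∑ i, ∑ j, W i j * ∑ k, v i k * (u i k - u j k) := by
    rw [Finset.sum_comm]
    simp only [hW.apply, ← Finset.sum_neg_distrib, ← mul_neg]
    congr! 4 with i _ j _ k _
    ring
  have hhalf : ∑ i, ∑ j, W i j * ∑ k, v i k * (u i k - u j k) =
      ∑ i, ∑ k, v i k * (graphLaplacian W * u) i k := by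
    congr! 1 with i
    simp only [Finset.mul_sum]
    rw [Finset.sum_comm]
    congr! 1 with k
    rw [graphLaplacian_mul_apply, Finset.sum_mul, ← Finset.sum_sub_distrib, Finset.mul_sum]
    congr! 1
    ring
  calc _ = ∑ i, ∑ j, W i j * ∑ k, v i k * (u i k - u j k)
        - ∑ i, ∑ j, W i j * ∑ k, v j k * (u i k - u j k) := by
        simp only [← Finset.sum_sub_distrib, ← mul_sub]
        congr! 4
        ring
    _ = _ := by rw [hswap, hhalf]; ring

def graphObjectiveGrad (W : Matrix ι ι ℝ) (s c : ι → ℝ) (μ : ℝ) (Y F : Matrix ι κ ℝ) :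
    Matrix ι κ ℝ :=
  4 • (diagonal s * (graphLaplacian W * (diagonal s * F))) + (2 * μ) • (diagonal c * (F - Y))

lemma graphObjective_add [Fintype κ] {W : Matrix ι ι ℝ} (hW : W.IsSymm) (s c : ι → ℝ) (μ : ℝ)
    (Y F H : Matrix ι κ ℝ) :
    graphObjective W s c μ Y (F + H) = graphObjective W s c μ Y F
      + ∑ i, ∑ k, H i k * graphObjectiveGrad W s c μ Y F i k + graphObjective W s c μ 0 H := by
  have hgreen := sum_weighted_diff_mul_diff_eq_graphLaplacian hW (diagonal s * F) (diagonal s * H)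
  simp only [diagonal_mul] at hgreen
  have hsmooth : ∑ i, ∑ j, W i j * ∑ k, (s i * (F + H) i k - s j * (F + H) j k) ^ 2
      = ∑ i, ∑ j, W i j * ∑ k, (s i * F i k - s j * F j k) ^ 2
        + 2 * ∑ i, ∑ j, W i j * ∑ k, (s i * F i k - s j * F j k) * (s i * H i k - s j * H j k)
        + ∑ i, ∑ j, W i j * ∑ k, (s i * H i k - s j * H j k) ^ 2 := by
    simp only [Finset.mul_sum, ← Finset.sum_add_distrib]
    congr! 3
    simp only [Matrix.add_apply]
    ring
  have hfit : ∑ i, c i * ∑ k, ((F + H) i k - Y i k) ^ 2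
      = ∑ i, c i * ∑ k, (F i k - Y i k) ^ 2 + 2 * ∑ i, c i * ∑ k, H i k * (F i k - Y i k)
        + ∑ i, c i * ∑ k, (H i k - (0 : Matrix ι κ ℝ) i k) ^ 2 := by
    simp only [Finset.mul_sum, ← Finset.sum_add_distrib]
    congr! 2
    simp only [Matrix.add_apply, Matrix.zero_apply]
    ring
  have hgrad : ∑ i, ∑ k, H i k * graphObjectiveGrad W s c μ Y F i k
      = 4 * ∑ i, ∑ k, s i * H i k * (graphLaplacian W * (diagonal s * F)) i k
        + 2 * μ * ∑ i, c i * ∑ k, H i k * (F i k - Y i k) := by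
    simp only [graphObjectiveGrad, Finset.mul_sum, ← Finset.sum_add_distrib, Matrix.add_apply,
      Matrix.smul_apply, diagonal_mul, Matrix.sub_apply, smul_eq_mul]
    congr! 2
    ring
  rw [graphObjective, graphObjective, graphObjective, hsmooth, hfit, hgrad, hgreen]
  ring

lemma mul_eq_smul_of_col_eq_smul_inv_mulVec {R : Type*} [CommRing R] {M : Matrix ι ι R}
    (hM : IsUnit M) {t : R} {F Y : Matrix ι κ R}
    (hF : ∀ k, (fun i => F i k) = t • (M⁻¹ *ᵥ fun i => Y i k)) : M * F = t • Y := by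
  have hF' : F = t • (M⁻¹ * Y) := by
    ext i k
    exact congrFun (hF k) i
  rw [hF', Matrix.mul_smul, ← Matrix.mul_assoc, mul_nonsing_inv _ ((isUnit_iff_isUnit_det M).mp hM),
    Matrix.one_mul]

lemma graphObjectiveGrad_eq_zero {W : Matrix ι ι ℝ} {d : ι → ℝ} (hd : ∀ i, d i = ∑ j, W i j)
    (hdpos : ∀ i, 0 < d i) {σ μ : ℝ} (hμ : 2 + μ ≠ 0) {Y F : Matrix ι κ ℝ}
    (hF : (1 - (2 / (2 + μ)) • (diagonal (fun i => d i ^ (-σ)) * W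
      * diagonal (fun i => d i ^ (σ - 1)))) * F = (μ / (2 + μ)) • Y) :
    graphObjectiveGrad W (fun i => d i ^ (σ - 1)) (fun i => d i ^ (2 * σ - 1)) μ Y F = 0 := by
  set S := diagonal fun i => d i ^ (σ - 1)
  set P := diagonal fun i => d i ^ σ
  have hPinv : P * diagonal (fun i => d i ^ (-σ)) = 1 := by
    rw [diagonal_mul_diagonal, ← diagonal_one]
    congr 1; ext i
    rw [← Real.rpow_add (hdpos i), add_neg_cancel, Real.rpow_zero]
  have hSP : S * P = diagonal fun i => d i ^ (2 * σ - 1) := by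
    rw [diagonal_mul_diagonal]
    congr 1; ext i
    rw [← Real.rpow_add (hdpos i)]
    ring_nf
  have hL : graphLaplacian W * S = P - W * S := by
    rw [graphLaplacian, Matrix.sub_mul, diagonal_mul_diagonal]
    congr! 3 with i
    rw [← hd, Real.rpow_sub_one (hdpos i).ne']
    exact mul_div_cancel₀ _ (hdpos i).ne'
  have hPF : P * F - (2 / (2 + μ)) • (W * S * F) = (μ / (2 + μ)) • (P * Y) := by
    simpa only [Matrix.mul_smul, Matrix.sub_mul, Matrix.mul_sub, Matrix.one_mul, Matrix.smul_mul,
      ← Matrix.mul_assoc, hPinv] using congrArg (P * ·) hF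
  have hstat : 2 • (P * F - W * S * F) + μ • (P * F - P * Y) = 0 := by
    have := congrArg ((2 + μ) • ·) hPF
    simp only [smul_sub, smul_smul, mul_div_cancel₀ _ hμ] at this
    linear_combination (norm := module) this
  rw [graphObjectiveGrad, ← Matrix.mul_assoc (graphLaplacian W), hL, ← hSP]
  calc _ = (2 : ℝ) • (S * (2 • (P * F - W * S * F) + μ • (P * F - P * Y))) := by
        simp only [Matrix.mul_add, Matrix.mul_smul, Matrix.mul_sub, Matrix.sub_mul,
          Matrix.mul_assoc]
        module
    _ = 0 := by rw [hstat, Matrix.mul_zero, smul_zero]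

end Laplacian

/-- The unique minimizer of the generalized semi-supervised learning objective
is given columnwise by `F_{·k} = (μ/(2+μ)) (I − (2/(2+μ)) D^{−σ} W D^{σ−1})^{−1} Y_{·k}`,
assuming `I − (2/(2+μ)) D^{−σ} W D^{σ−1}` is invertible. -/
theorem generalized_objective_unique_minimizer
    (N K : ℕ) (W : Matrix (Fin N) (Fin N) ℝ)
    (hWsym : W.IsSymm) (hWnonneg : ∀ i j, 0 ≤ W i j)
    (d : Fin N → ℝ) (hd : ∀ i, d i = ∑ j, W i j) (hdpos : ∀ i, 0 < d i)
    (σ μ : ℝ) (hμ : 0 < μ) (Y : Matrix (Fin N) (Fin K) ℝ)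
    (Q : Matrix (Fin N) (Fin K) ℝ → ℝ)
    (hQ : ∀ F, Q F =
      (∑ i, ∑ j, W i j * ∑ k, (d i ^ (σ - 1) * F i k - d j ^ (σ - 1) * F j k) ^ 2)
      + μ * ∑ i, d i ^ (2 * σ - 1) * ∑ k, (F i k - Y i k) ^ 2)
    (M : Matrix (Fin N) (Fin N) ℝ)
    (hM : M = 1 - (2 / (2 + μ)) •
      (Matrix.diagonal (fun i => d i ^ (-σ)) * W * Matrix.diagonal (fun i => d i ^ (σ - 1))))
    (hMinv : IsUnit M)
    (F : Matrix (Fin N) (Fin K) ℝ)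
    (hF : ∀ k, (fun i => F i k) = (μ / (2 + μ)) • (M⁻¹ *ᵥ (fun i => Y i k))) :
    (∀ G, Q F ≤ Q G) ∧ (∀ G, (∀ G', Q G ≤ Q G') → G = F) := by
  set s := fun i => d i ^ (σ - 1)
  set c := fun i => d i ^ (2 * σ - 1)
  have hQ' : Q = graphObjective W s c μ Y := funext hQ
  have hc : ∀ i, 0 < c i := fun i => Real.rpow_pos_of_pos (hdpos i) _
  have hgrad : graphObjectiveGrad W s c μ Y F = 0 := graphObjectiveGrad_eq_zero hd hdpos
    (by positivity) (hM ▸ mul_eq_smul_of_col_eq_smul_inv_mulVec hMinv hF)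
  have hexpand (G) : Q G = Q F + graphObjective W s c μ 0 (G - F) := by
    have := graphObjective_add hWsym s c μ Y F (G - F)
    simp only [hgrad, Matrix.zero_apply, mul_zero, sum_const_zero, add_zero, add_sub_cancel] at this
    rwa [hQ']
  refine ⟨fun G => ?_, fun G hG => ?_⟩
  · rw [hexpand G]
    linarith [graphObjective_nonneg hWnonneg (fun i => (hc i).le) s hμ.le 0 (G - F)]
  · have hzero : graphObjective W s c μ 0 (G - F) = 0 :=
      le_antisymm (by linarith [hexpand G, hG F])
        (graphObjective_nonneg hWnonneg (fun i => (hc i).le) s hμ.le 0 (G - F))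
    exact sub_eq_zero.mp (eq_of_graphObjective_eq_zero hWnonneg hc s hμ hzero)
end

section
/- A matrix F satisfies the first-order optimality condition of the generalized objective if and only if F_{·k}^T (2I − 2 D^{σ−1} W D^{−σ} + μ I) = μ Y_{·k}^T for every k, i.e., ((2+μ) I − 2 D^{σ−1} W D^{−σ})^T F_{·k} = μ Y_{·k}. -/
/-!
Along a line `F + t • V` the objective is a quadratic polynomial in `t`; since
`A = D^{σ-1} L D^{σ-1}` and `B = D^{2σ-1}` are symmetric, its derivative at `0` is
`2 ∑ₖ ⟪Vₖ, (2A + μB) Fₖ - μ B Yₖ⟫`. The identity `2A + μB = B Mᵀ` with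
`M = (2+μ) I - 2 D^{σ-1} W D^{-σ}` turns the gradient column into `B (Mᵀ Fₖ - μ Yₖ)`, and a
linear functional of `V` vanishes identically iff its coefficients do; `B` is invertible.
-/

open Matrix Finset

section
variable {n m : Type*} [Fintype n] [Fintype m]

theorem dotProduct_mulVec_add_smul {R : Type*} [CommRing R] {C : Matrix n n R} (hC : C.IsSymm)
    (x v : n → R) (t : R) :
    (x + t • v) ⬝ᵥ (C *ᵥ (x + t • v)) =
      x ⬝ᵥ (C *ᵥ x) + t * (2 * (v ⬝ᵥ (C *ᵥ x))) + t ^ 2 * (v ⬝ᵥ (C *ᵥ v)) := by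
  have hsymm : x ⬝ᵥ (C *ᵥ v) = v ⬝ᵥ (C *ᵥ x) := by
    rw [dotProduct_mulVec, ← mulVec_transpose, hC.eq, dotProduct_comm]
  simp only [mulVec_add, mulVec_smul, dotProduct_add, add_dotProduct, dotProduct_smul,
    smul_dotProduct, smul_eq_mul, hsymm]
  ring

theorem hasDerivAt_dotProduct_mulVec_add_smul {C : Matrix n n ℝ} (hC : C.IsSymm) (x v : n → ℝ) :
    HasDerivAt (fun t : ℝ => (x + t • v) ⬝ᵥ (C *ᵥ (x + t • v))) (2 * (v ⬝ᵥ (C *ᵥ x))) 0 := by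
  simp only [dotProduct_mulVec_add_smul hC]
  simpa using (((hasDerivAt_id (0 : ℝ)).mul_const (2 * (v ⬝ᵥ (C *ᵥ x)))).const_add
    (x ⬝ᵥ (C *ᵥ x))).fun_add ((hasDerivAt_pow 2 (0 : ℝ)).mul_const (v ⬝ᵥ (C *ᵥ v)))

theorem hasDerivAt_sum_dotProduct_mulVec_add_smul {C : Matrix n n ℝ} (hC : C.IsSymm)
    (X V : Matrix n m ℝ) :
    HasDerivAt (fun t : ℝ => ∑ k, (fun i => (X + t • V) i k) ⬝ᵥ (C *ᵥ fun i => (X + t • V) i k))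
      (2 * ∑ k, (fun i => V i k) ⬝ᵥ (C *ᵥ fun i => X i k)) 0 := by
  rw [mul_sum]
  exact HasDerivAt.fun_sum fun k _ =>
    hasDerivAt_dotProduct_mulVec_add_smul hC (fun i => X i k) (fun i => V i k)

theorem forall_sum_dotProduct_eq_zero_iff {R : Type*} [Ring R] [LinearOrder R]
    [IsStrictOrderedRing R] (g : m → n → R) :
    (∀ V : Matrix n m R, ∑ k, (fun i => V i k) ⬝ᵥ g k = 0) ↔ ∀ k, g k = 0 := by
  refine ⟨fun h k => ?_, fun h V => by simp [h]⟩
  have hself : ∑ k, g k ⬝ᵥ g k = 0 := h fun i k => g k i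
  have hnonneg (k : m) : 0 ≤ g k ⬝ᵥ g k := sum_nonneg fun i _ => mul_self_nonneg (g k i)
  exact dotProduct_self_eq_zero.1
    ((sum_eq_zero_iff_of_nonneg fun k _ => hnonneg k).1 hself k (mem_univ k))

theorem hasDerivAt_regularized_objective {A B : Matrix n n ℝ} (hA : A.IsSymm) (hB : B.IsSymm)
    {μ : ℝ} {Y : Matrix n m ℝ} {Q : Matrix n m ℝ → ℝ}
    (hQ : ∀ F, Q F = 2 * ∑ k, (fun i => F i k) ⬝ᵥ (A *ᵥ fun i => F i k)
      + μ * ∑ k, (fun i => F i k - Y i k) ⬝ᵥ (B *ᵥ fun i => F i k - Y i k))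
    (F V : Matrix n m ℝ) :
    HasDerivAt (fun t : ℝ => Q (F + t • V))
      (2 * ∑ k, (fun i => V i k) ⬝ᵥ
        ((2 • A + μ • B) *ᵥ (fun i => F i k) - μ • B *ᵥ fun i => Y i k)) 0 := by
  have hshift (t : ℝ) (k : m) :
      (fun i => (F + t • V) i k - Y i k) = fun i => (F - Y + t • V) i k := by
    funext i
    simp only [Matrix.add_apply, Matrix.sub_apply, Matrix.smul_apply, smul_eq_mul]
    ring
  have hcol (k : m) : (fun i => (F - Y) i k) = (fun i => F i k) - fun i => Y i k := rfl
  simp only [hQ, hshift]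
  refine (((hasDerivAt_sum_dotProduct_mulVec_add_smul hA F V).const_mul 2).fun_add
    ((hasDerivAt_sum_dotProduct_mulVec_add_smul hB (F - Y) V).const_mul μ)).congr_deriv ?_
  simp only [hcol, two_nsmul, add_mulVec, smul_mulVec, mulVec_sub, dotProduct_add,
    dotProduct_sub, dotProduct_smul, smul_eq_mul, mul_sum, ← sum_add_distrib]
  refine sum_congr rfl fun k _ => ?_
  ring

theorem diagonal_mulVec_eq_zero_iff {R : Type*} [Semiring R] [NoZeroDivisors R] [DecidableEq n]
    {d : n → R} (hd : ∀ i, d i ≠ 0) {x : n → R} :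
    diagonal d *ᵥ x = 0 ↔ x = 0 := by
  simp [funext_iff, mulVec_diagonal, hd]

theorem two_smul_add_smul_eq_mul_transpose [DecidableEq n] {W : Matrix n n ℝ} (hW : W.IsSymm)
    {d : n → ℝ} (hd : ∀ i, 0 < d i) (σ μ : ℝ) :
    2 • (diagonal (fun i => d i ^ (σ - 1)) * (diagonal d - W) * diagonal (fun i => d i ^ (σ - 1)))
        + μ • diagonal (fun i => d i ^ (2 * σ - 1))
      = diagonal (fun i => d i ^ (2 * σ - 1)) * ((2 + μ) • (1 : Matrix n n ℝ)
          - 2 • (diagonal (fun i => d i ^ (σ - 1)) * W * diagonal (fun i => d i ^ (-σ))))ᵀ := by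
  have hD : diagonal (fun i => d i ^ (σ - 1)) * diagonal d * diagonal (fun i => d i ^ (σ - 1))
      = diagonal (fun i => d i ^ (2 * σ - 1)) := by
    simp only [diagonal_mul_diagonal]
    congr 1; funext i
    rw [show 2 * σ - 1 = (σ - 1) + 1 + (σ - 1) by ring, Real.rpow_add (hd i),
      Real.rpow_add (hd i), Real.rpow_one]
  have hD' : diagonal (fun i => d i ^ (2 * σ - 1)) * diagonal (fun i => d i ^ (-σ))
      = diagonal (fun i => d i ^ (σ - 1)) := by
    simp only [diagonal_mul_diagonal, ← Real.rpow_add (hd _)]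
    congr 1; funext i; congr 1; ring
  simp only [transpose_sub, transpose_smul, transpose_one, transpose_mul, diagonal_transpose,
    hW.eq, mul_sub, sub_mul, Matrix.mul_smul, mul_one, ← mul_assoc, hD', hD]
  module
end

theorem generalized_first_order_condition_general
    (N K : ℕ) (W : Matrix (Fin N) (Fin N) ℝ)
    (hWsym : W.IsSymm)
    (d : Fin N → ℝ) (hdpos : ∀ i, 0 < d i)
    (σ μ : ℝ) (Y : Matrix (Fin N) (Fin K) ℝ)
    (Q : Matrix (Fin N) (Fin K) ℝ → ℝ)
    (hQ : ∀ F, Q F =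
      2 * ∑ k, (fun i => F i k) ⬝ᵥ
          ((Matrix.diagonal (fun i => d i ^ (σ - 1)) * (Matrix.diagonal d - W) *
            Matrix.diagonal (fun i => d i ^ (σ - 1))) *ᵥ (fun i => F i k))
      + μ * ∑ k, (fun i => F i k - Y i k) ⬝ᵥ
          ((Matrix.diagonal (fun i => d i ^ (2 * σ - 1))) *ᵥ (fun i => F i k - Y i k)))
    (F : Matrix (Fin N) (Fin K) ℝ) :
    (∀ V : Matrix (Fin N) (Fin K) ℝ, deriv (fun t : ℝ => Q (F + t • V)) 0 = 0)
    ↔ ∀ k, ((2 + μ) • (1 : Matrix (Fin N) (Fin N) ℝ)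
          - 2 • (Matrix.diagonal (fun i => d i ^ (σ - 1)) * W *
              Matrix.diagonal (fun i => d i ^ (-σ))))ᵀ *ᵥ (fun i => F i k)
        = μ • (fun i => Y i k) := by
  have hA : (diagonal (fun i => d i ^ (σ - 1)) * (diagonal d - W) *
      diagonal (fun i => d i ^ (σ - 1))).IsSymm := by
    rw [IsSymm, transpose_mul, transpose_mul, transpose_sub, diagonal_transpose,
      diagonal_transpose, hWsym.eq, Matrix.mul_assoc]
  have hderiv (V : Matrix (Fin N) (Fin K) ℝ) :=
    hasDerivAt_regularized_objective hA (isSymm_diagonal _) hQ F V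
  have hB : ∀ x, diagonal (fun i => d i ^ (2 * σ - 1)) *ᵥ x = 0 ↔ x = 0 := fun x =>
    diagonal_mulVec_eq_zero_iff fun i => (Real.rpow_pos_of_pos (hdpos i) _).ne'
  simp only [fun V => (hderiv V).deriv, two_smul_add_smul_eq_mul_transpose hWsym hdpos,
    ← mulVec_mulVec, ← mulVec_smul, ← mulVec_sub, mul_eq_zero, two_ne_zero, false_or,
    forall_sum_dotProduct_eq_zero_iff, hB, sub_eq_zero]

/-- A matrix `F` satisfies the first-order optimality condition of the
generalized objective (all directional derivatives of `Q` at `F` vanish) if and only if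
`((2+μ) I − 2 D^{σ−1} W D^{−σ})ᵀ F_{·k} = μ Y_{·k}` for every `k`. -/
theorem generalized_first_order_condition
    (N K : ℕ) (W : Matrix (Fin N) (Fin N) ℝ)
    (hWsym : W.IsSymm) (hWnonneg : ∀ i j, 0 ≤ W i j)
    (d : Fin N → ℝ) (hd : ∀ i, d i = ∑ j, W i j) (hdpos : ∀ i, 0 < d i)
    (σ μ : ℝ) (hμ : 0 < μ) (Y : Matrix (Fin N) (Fin K) ℝ)
    (Q : Matrix (Fin N) (Fin K) ℝ → ℝ)
    (hQ : ∀ F, Q F =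
      2 * ∑ k, (fun i => F i k) ⬝ᵥ
          ((Matrix.diagonal (fun i => d i ^ (σ - 1)) * (Matrix.diagonal d - W) *
            Matrix.diagonal (fun i => d i ^ (σ - 1))) *ᵥ (fun i => F i k))
      + μ * ∑ k, (fun i => F i k - Y i k) ⬝ᵥ
          ((Matrix.diagonal (fun i => d i ^ (2 * σ - 1))) *ᵥ (fun i => F i k - Y i k)))
    (F : Matrix (Fin N) (Fin K) ℝ) :
    (∀ V : Matrix (Fin N) (Fin K) ℝ, deriv (fun t : ℝ => Q (F + t • V)) 0 = 0)
    ↔ ∀ k, ((2 + μ) • (1 : Matrix (Fin N) (Fin N) ℝ)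
          - 2 • (Matrix.diagonal (fun i => d i ^ (σ - 1)) * W *
              Matrix.diagonal (fun i => d i ^ (-σ))))ᵀ *ᵥ (fun i => F i k)
        = μ • (fun i => Y i k) :=
  generalized_first_order_condition_general N K W hWsym d hdpos σ μ Y Q hQ F
end

section
/- For a row-stochastic matrix P with unique stationary distribution π, the matrix I − P + 1π (where 1 is the all-ones column vector and π the stationary row vector) is invertible, and the deviation matrix H = (I − P + 1π)^{−1} − 1π satisfies H1 = 0 and πH = 0. -/
open Matrix Finset

/-!
A row vector `y` with `y (I - P + 1π) = 0` has total mass `0`, because `P` preserves mass and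
`π` has mass `1`; hence `y P = y`. Then `|y|` and `y + |y|` are nonnegative stationary vectors
of the same mass, so by uniqueness of the stationary distribution both are that mass times `π`,
which forces `y = 0`. So `I - P + 1π` is invertible. It fixes `1` on the right and `π` on the
left, hence so does its inverse, and so does `1π`; this gives `H 1 = 0` and `π H = 0`.
-/

namespace Matrix

variable {R n : Type*} [Fintype n]

lemma vecMul_replicateRow [Semiring R] (x π : n → R) :
    x ᵥ* replicateRow n π = (∑ i, x i) • π := by
  ext j
  simp [vecMul, dotProduct, Finset.sum_mul]

lemma sum_vecMul_of_mem_rowStochastic [DecidableEq n] [Semiring R] [PartialOrder R]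
    [IsOrderedRing R] {P : Matrix n n R} (hP : P ∈ rowStochastic R n) (x : n → R) :
    ∑ j, (x ᵥ* P) j = ∑ i, x i := by
  rw [← dotProduct_one, ← dotProduct_mulVec, hP.2, dotProduct_one]

lemma inv_mulVec_eq_self_of_mulVec_eq_self [DecidableEq n] [CommRing R] {A : Matrix n n R}
    (hA : IsUnit A) {v : n → R} (h : A *ᵥ v = v) : A⁻¹ *ᵥ v = v := by
  conv_lhs => rw [← h]
  rw [mulVec_mulVec, nonsing_inv_mul A ((isUnit_iff_isUnit_det A).mp hA), one_mulVec]

lemma vecMul_inv_eq_self_of_vecMul_eq_self [DecidableEq n] [CommRing R] {A : Matrix n n R}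
    (hA : IsUnit A) {v : n → R} (h : v ᵥ* A = v) : v ᵥ* A⁻¹ = v := by
  conv_lhs => rw [← h]
  rw [vecMul_vecMul, mul_nonsing_inv A ((isUnit_iff_isUnit_det A).mp hA), vecMul_one]

section OrderedField

variable [Field R] [LinearOrder R] [IsStrictOrderedRing R] {P : Matrix n n R} {π : n → R}

/-- `|y| ≤ |y| ᵥ* P` entrywise by the triangle inequality, and both sides have the same mass. -/
lemma abs_vecMul_eq_of_vecMul_eq [DecidableEq n] (hP : P ∈ rowStochastic R n) {y : n → R}
    (hy : y ᵥ* P = y) : |y| ᵥ* P = |y| := by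
  have hle : ∀ j, |y| j ≤ (|y| ᵥ* P) j := fun j =>
    calc |y| j = |∑ i, y i * P i j| := by rw [Pi.abs_apply, ← congrFun hy j]; rfl
      _ ≤ ∑ i, |y i * P i j| := abs_sum_le_sum_abs _ _
      _ = (|y| ᵥ* P) j := by
        simp only [abs_mul, abs_of_nonneg (hP.1 _ j)]; rfl
  have heq := (sum_eq_sum_iff_of_le fun j _ => hle j).mp
    (sum_vecMul_of_mem_rowStochastic hP |y|).symm
  exact funext fun j => (heq j (mem_univ j)).symm

lemma eq_sum_smul_of_vecMul_eq
    (huniq : ∀ x : n → R, (∀ i, 0 ≤ x i) → ∑ i, x i = 1 → x ᵥ* P = x → x = π)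
    {x : n → R} (hx0 : ∀ i, 0 ≤ x i) (hx : x ᵥ* P = x) : x = (∑ i, x i) • π := by
  set s := ∑ i, x i
  by_cases hs : s = 0
  · ext i
    simp [hs, (sum_eq_zero_iff_of_nonneg fun i _ => hx0 i).mp hs i (mem_univ i)]
  · have hπ : s⁻¹ • x = π := huniq _
      (fun i => mul_nonneg (inv_nonneg.mpr (sum_nonneg fun i _ => hx0 i)) (hx0 i))
      (by simp [s, ← mul_sum, inv_mul_cancel₀ hs]) (by rw [smul_vecMul, hx])
    rw [← hπ, smul_smul, mul_inv_cancel₀ hs, one_smul]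

lemma eq_zero_of_vecMul_eq_of_sum_eq_zero [DecidableEq n] (hP : P ∈ rowStochastic R n)
    (huniq : ∀ x : n → R, (∀ i, 0 ≤ x i) → ∑ i, x i = 1 → x ᵥ* P = x → x = π)
    {y : n → R} (hy : y ᵥ* P = y) (hsum : ∑ i, y i = 0) : y = 0 := by
  have habs := abs_vecMul_eq_of_vecMul_eq hP hy
  have h₁ := eq_sum_smul_of_vecMul_eq huniq (fun i => abs_nonneg (y i)) habs
  have h₂ := eq_sum_smul_of_vecMul_eq huniq (x := y + |y|) (fun i => add_abs_nonneg (y i))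
    (by rw [add_vecMul, hy, habs])
  simp only [Pi.add_apply, Pi.abs_apply, sum_add_distrib, hsum, zero_add] at h₁ h₂
  exact add_eq_right.mp (h₂.trans h₁.symm)

lemma isUnit_one_sub_add_replicateRow [DecidableEq n] (hP : P ∈ rowStochastic R n)
    (huniq : ∀ x : n → R, (∀ i, 0 ≤ x i) → ∑ i, x i = 1 → x ᵥ* P = x → x = π)
    (hπsum : ∑ i, π i = 1) : IsUnit (1 - P + replicateRow n π) := by
  rw [isUnit_iff_isUnit_det, isUnit_iff_ne_zero, Ne, ← exists_vecMul_eq_zero_iff]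
  rintro ⟨y, hy0, hy⟩
  rw [vecMul_add, vecMul_sub, vecMul_one, vecMul_replicateRow] at hy
  have hsum : ∑ i, y i = 0 := by
    simpa [sum_add_distrib, sum_sub_distrib, sum_vecMul_of_mem_rowStochastic hP, ← mul_sum,
      hπsum] using congrArg (fun v => ∑ i, v i) hy
  rw [hsum, zero_smul, add_zero, sub_eq_zero] at hy
  exact hy0 (eq_zero_of_vecMul_eq_of_sum_eq_zero hP huniq hy.symm hsum)

end OrderedField

end Matrix

theorem deviation_matrix_properties_general
    (N : ℕ) (P : Matrix (Fin N) (Fin N) ℝ)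
    (hPnonneg : ∀ i j, 0 ≤ P i j) (hProw : ∀ i, ∑ j, P i j = 1)
    (π : Fin N → ℝ)
    (hπsum : ∑ i, π i = 1) (hπstat : π ᵥ* P = π)
    (hπuniq : ∀ π' : Fin N → ℝ,
      (∀ i, 0 ≤ π' i) → (∑ i, π' i = 1) → π' ᵥ* P = π' → π' = π)
    (Pi1 H : Matrix (Fin N) (Fin N) ℝ)
    (hPi1 : Pi1 = Matrix.of (fun _ j => π j))
    (hH : H = (1 - P + Pi1)⁻¹ - Pi1) :
    IsUnit (1 - P + Pi1) ∧ H *ᵥ (fun _ => (1 : ℝ)) = 0 ∧ (fun i => π i) ᵥ* H = 0 := by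
  have hP : P ∈ rowStochastic ℝ (Fin N) := mem_rowStochastic_iff_sum.mpr ⟨hPnonneg, hProw⟩
  replace hPi1 : Pi1 = replicateRow (Fin N) π := hPi1
  subst hPi1 hH
  have hA := isUnit_one_sub_add_replicateRow hP hπuniq hπsum
  have hA1 : (1 - P + replicateRow (Fin N) π) *ᵥ 1 = 1 := by
    rw [add_mulVec, sub_mulVec, one_mulVec, hP.2, replicateRow_mulVec_eq_const, dotProduct_one,
      hπsum, sub_self, zero_add]
    rfl
  have hπA : π ᵥ* (1 - P + replicateRow (Fin N) π) = π := by
    rw [vecMul_add, vecMul_sub, vecMul_one, hπstat, vecMul_replicateRow, hπsum, sub_self,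
      one_smul, zero_add]
  refine ⟨hA, ?_, ?_⟩
  · change _ *ᵥ 1 = 0
    rw [sub_mulVec, inv_mulVec_eq_self_of_mulVec_eq_self hA hA1, replicateRow_mulVec_eq_const,
      dotProduct_one, hπsum, sub_eq_zero]
    rfl
  · change π ᵥ* _ = 0
    rw [vecMul_sub, vecMul_inv_eq_self_of_vecMul_eq_self hA hπA, vecMul_replicateRow, hπsum,
      one_smul, sub_self]

/-- For a row-stochastic matrix `P` with unique stationary distribution `π`,
the matrix `I − P + 1π` is invertible, and the deviation matrix
`H = (I − P + 1π)⁻¹ − 1π` satisfies `H1 = 0` and `πH = 0`. -/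
theorem deviation_matrix_properties
    (N : ℕ) (P : Matrix (Fin N) (Fin N) ℝ)
    (hPnonneg : ∀ i j, 0 ≤ P i j) (hProw : ∀ i, ∑ j, P i j = 1)
    (π : Fin N → ℝ)
    (hπnonneg : ∀ i, 0 ≤ π i) (hπsum : ∑ i, π i = 1) (hπstat : π ᵥ* P = π)
    (hπuniq : ∀ π' : Fin N → ℝ,
      (∀ i, 0 ≤ π' i) → (∑ i, π' i = 1) → π' ᵥ* P = π' → π' = π)
    (Pi1 H : Matrix (Fin N) (Fin N) ℝ)
    (hPi1 : Pi1 = Matrix.of (fun _ j => π j))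
    (hH : H = (1 - P + Pi1)⁻¹ - Pi1) :
    IsUnit (1 - P + Pi1) ∧ H *ᵥ (fun _ => (1 : ℝ)) = 0 ∧ (fun i => π i) ᵥ* H = 0 :=
  deviation_matrix_properties_general N P hPnonneg hProw π hπsum hπstat hπuniq Pi1 H hPi1 hH
end

section
/- As α → 1⁻, the generalized classification function F_{·k} = (1−α)(I − α D^{−σ} W D^{σ−1})^{−1} Y_{·k} converges to the vector whose i-th component is d_i^{1−σ} · (1^T D 1)^{−1} · Σ_{j : Y_{jk}=1} d_j^{σ}; consequently, the limiting classification of every node is determined by the class k maximizing Σ_{j labeled k} d_j^{σ}. -/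
/-!
With `P = D⁻¹W`, which is row stochastic with stationary distribution `π = d / ∑ d` because `W` is
symmetric, the matrix `D^{-σ} W D^{σ-1}` is the conjugate `D^{1-σ} P D^{σ-1}`; hence
`F_{·k}(α) = D^{1-σ} x_α` with `x_α = (1-α)(I-αP)⁻¹ z` and `z = D^{σ-1} Y_{·k}`.
The vector `x_α` solves `x = (1-α) z + α P x`, so it has the same `π`-average as `z`.
Some power `P^m` has positive entries and therefore contracts the oscillation `max - min` by a
factor `c < 1` (Dobrushin); iterating the fixed-point equation `m` times gives
`osc x_α ≤ (1-α) m osc z / (1-c) → 0`, so every coordinate of `x_α` tends to `π ⬝ z`.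
-/

open Matrix Finset Filter Topology

section Oscillation

variable {n : Type*} [Fintype n]

noncomputable def osc (v : n → ℝ) : ℝ := (⨆ i, v i) - ⨅ i, v i

lemma sub_le_osc (v : n → ℝ) (i j : n) : v i - v j ≤ osc v :=
  sub_le_sub (le_ciSup (Finite.bddAbove_range v) i) (ciInf_le (Finite.bddBelow_range v) j)

lemma abs_sub_dotProduct_le_osc {w : n → ℝ} (hw0 : ∀ j, 0 ≤ w j) (hw1 : ∑ j, w j = 1)
    (v : n → ℝ) (i : n) : |v i - w ⬝ᵥ v| ≤ osc v := by
  have hsplit : v i - w ⬝ᵥ v = ∑ j, w j * (v i - v j) := by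
    simp only [dotProduct, mul_sub, Finset.sum_sub_distrib, ← Finset.sum_mul, hw1, one_mul]
  calc |v i - w ⬝ᵥ v| ≤ ∑ j, |w j * (v i - v j)| := hsplit ▸ Finset.abs_sum_le_sum_abs _ _
    _ ≤ ∑ j, w j * osc v := Finset.sum_le_sum fun j _ => by
        rw [abs_mul, abs_of_nonneg (hw0 j)]
        exact mul_le_mul_of_nonneg_left
          (abs_sub_le_iff.2 ⟨sub_le_osc v i j, sub_le_osc v j i⟩) (hw0 j)
    _ = osc v := by rw [← Finset.sum_mul, hw1, one_mul]

variable [Nonempty n]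

lemma osc_le_iff {v : n → ℝ} {s : ℝ} : osc v ≤ s ↔ ∀ i j, v i - v j ≤ s := by
  refine ⟨fun h i j => (sub_le_osc v i j).trans h, fun h => ?_⟩
  rw [osc, sub_le_iff_le_add]
  refine ciSup_le fun i => ?_
  have : v i - s ≤ ⨅ j, v j := le_ciInf fun j => by linarith [h i j]
  linarith

lemma osc_nonneg (v : n → ℝ) : 0 ≤ osc v := by
  simpa using sub_le_osc v (Classical.arbitrary n) (Classical.arbitrary n)

lemma osc_add_le (u v : n → ℝ) : osc (u + v) ≤ osc u + osc v :=
  osc_le_iff.2 fun i j => by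
    simp only [Pi.add_apply]
    linarith [sub_le_osc u i j, sub_le_osc v i j]

lemma osc_smul_le {a : ℝ} (ha : 0 ≤ a) (v : n → ℝ) : osc (a • v) ≤ a * osc v :=
  osc_le_iff.2 fun i j => by
    simp only [Pi.smul_apply, smul_eq_mul, ← mul_sub]
    exact mul_le_mul_of_nonneg_left (sub_le_osc v i j) ha

end Oscillation

section Stochastic

variable {n : Type*} [Fintype n] [DecidableEq n] {Q : Matrix n n ℝ}

lemma osc_mulVec_le [Nonempty n] (hQ : Q ∈ rowStochastic ℝ n) {δ : ℝ} (hδ : ∀ i j, δ ≤ Q i j)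
    (v : n → ℝ) : osc (Q *ᵥ v) ≤ (1 - Fintype.card n * δ) * osc v := by
  have hsplit : ∀ l, (Q *ᵥ v) l = ∑ k, (Q l k - δ) * v k + δ * ∑ k, v k := fun l => by
    simp only [mulVec, dotProduct, sub_mul, Finset.sum_sub_distrib, Finset.mul_sum]
    ring
  have hrow : ∀ l, ∑ k, (Q l k - δ) = 1 - Fintype.card n * δ := fun l => by
    simp [Finset.sum_sub_distrib, sum_row_of_mem_rowStochastic hQ l]
  refine osc_le_iff.2 fun i j => ?_
  have hupper : ∑ k, (Q i k - δ) * v k ≤ (1 - Fintype.card n * δ) * ⨆ k, v k := by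
    rw [← hrow i, Finset.sum_mul]
    exact Finset.sum_le_sum fun k _ =>
      mul_le_mul_of_nonneg_left (le_ciSup (Finite.bddAbove_range v) k) (sub_nonneg.2 (hδ i k))
  have hlower : (1 - Fintype.card n * δ) * ⨅ k, v k ≤ ∑ k, (Q j k - δ) * v k := by
    rw [← hrow j, Finset.sum_mul]
    exact Finset.sum_le_sum fun k _ =>
      mul_le_mul_of_nonneg_left (ciInf_le (Finite.bddBelow_range v) k) (sub_nonneg.2 (hδ j k))
  rw [hsplit i, hsplit j, osc, mul_sub]
  linarith

lemma osc_mulVec_le_osc [Nonempty n] (hQ : Q ∈ rowStochastic ℝ n) (v : n → ℝ) :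
    osc (Q *ᵥ v) ≤ osc v := by
  simpa using osc_mulVec_le hQ (fun _ _ => nonneg_of_mem_rowStochastic hQ) v

lemma exists_osc_pow_mulVec_le [Nonempty n] (hQ : Q ∈ rowStochastic ℝ n)
    {m : ℕ} (hm : ∀ i j, 0 < (Q ^ m) i j) :
    ∃ c < 1, ∀ v : n → ℝ, osc (Q ^ m *ᵥ v) ≤ c * osc v := by
  obtain ⟨⟨i₀, j₀⟩, hmin⟩ := Finite.exists_min fun p : n × n => (Q ^ m) p.1 p.2
  refine ⟨1 - Fintype.card n * (Q ^ m) i₀ j₀, ?_,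
    osc_mulVec_le (pow_mem hQ m) fun i j => hmin (i, j)⟩
  have := mul_pos (Nat.cast_pos.2 (Fintype.card_pos (α := n))) (hm i₀ j₀)
  linarith

lemma det_one_sub_smul_ne_zero (hQ : Q ∈ rowStochastic ℝ n) {α : ℝ} (hα0 : 0 ≤ α)
    (hα1 : α < 1) : (1 - α • Q).det ≠ 0 := by
  refine det_ne_zero_of_sum_row_lt_diag fun k => ?_
  have hoff : ∑ j ∈ univ.erase k, ‖(1 - α • Q) k j‖ = α * (1 - Q k k) := by
    rw [← sum_row_of_mem_rowStochastic hQ k, ← Finset.add_sum_erase _ _ (mem_univ k),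
      add_sub_cancel_left, Finset.mul_sum]
    refine Finset.sum_congr rfl fun j hj => ?_
    rw [Matrix.sub_apply, one_apply_ne (Finset.ne_of_mem_erase hj).symm, Matrix.smul_apply,
      smul_eq_mul, zero_sub, norm_neg,
      Real.norm_of_nonneg (mul_nonneg hα0 (nonneg_of_mem_rowStochastic hQ))]
  have hkk : Q k k ≤ 1 := le_one_of_mem_rowStochastic hQ
  have hdiag : ‖(1 - α • Q) k k‖ = 1 - α * Q k k := by
    rw [Matrix.sub_apply, one_apply_eq, Matrix.smul_apply, smul_eq_mul, Real.norm_of_nonneg]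
    nlinarith
  rw [hoff, hdiag]
  linarith

end Stochastic

section AbelMean

variable {n : Type*} [Fintype n] [DecidableEq n] {Q : Matrix n n ℝ} {α : ℝ}

/-- Since `(1 - α) (1 - α Q)⁻¹ = (1 - α) ∑ αᵏ Qᵏ`, this is the Abel mean of `Qᵏ z`. -/
noncomputable def abelMean (Q : Matrix n n ℝ) (α : ℝ) (z : n → ℝ) : n → ℝ :=
  (1 - α) • ((1 - α • Q)⁻¹ *ᵥ z)

lemma abelMean_eq (hQ : Q ∈ rowStochastic ℝ n) (hα0 : 0 ≤ α) (hα1 : α < 1) (z : n → ℝ) :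
    abelMean Q α z = (1 - α) • z + α • (Q *ᵥ abelMean Q α z) := by
  have hinv : (1 - α • Q) * (1 - α • Q)⁻¹ = 1 :=
    mul_nonsing_inv _ (isUnit_iff_ne_zero.2 (det_one_sub_smul_ne_zero hQ hα0 hα1))
  have hsolve : (1 - α • Q) *ᵥ abelMean Q α z = (1 - α) • z := by
    rw [abelMean, mulVec_smul, mulVec_mulVec, hinv, one_mulVec]
  calc abelMean Q α z = (1 - α • Q) *ᵥ abelMean Q α z + α • (Q *ᵥ abelMean Q α z) := by
        rw [sub_mulVec, one_mulVec, smul_mulVec, sub_add_cancel]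
    _ = (1 - α) • z + α • (Q *ᵥ abelMean Q α z) := by rw [hsolve]

lemma dotProduct_abelMean (hQ : Q ∈ rowStochastic ℝ n) (hα0 : 0 ≤ α) (hα1 : α < 1)
    {w : n → ℝ} (hw : w ᵥ* Q = w) (z : n → ℝ) : w ⬝ᵥ abelMean Q α z = w ⬝ᵥ z := by
  have h := congrArg (w ⬝ᵥ ·) (abelMean_eq hQ hα0 hα1 z)
  simp only [dotProduct_add, dotProduct_smul, dotProduct_mulVec, hw, smul_eq_mul] at h
  have : (1 - α) * (w ⬝ᵥ abelMean Q α z) = (1 - α) * (w ⬝ᵥ z) := by linarith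
  exact mul_left_cancel₀ (sub_ne_zero.2 hα1.ne') this

lemma osc_le_of_eq_add_smul_mulVec [Nonempty n] (hQ : Q ∈ rowStochastic ℝ n) (hα0 : 0 ≤ α)
    (hα1 : α ≤ 1) {x z : n → ℝ} (hx : x = (1 - α) • z + α • (Q *ᵥ x)) (k : ℕ) :
    osc x ≤ (1 - α) * k * osc z + α ^ k * osc (Q ^ k *ᵥ x) := by
  induction k with
  | zero => simp
  | succ k ih =>
    have hstep : osc (Q ^ k *ᵥ x) ≤ (1 - α) * osc z + α * osc (Q ^ (k + 1) *ᵥ x) := by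
      conv_lhs => rw [hx, mulVec_add, mulVec_smul, mulVec_smul, mulVec_mulVec, ← pow_succ]
      calc _ ≤ osc ((1 - α) • (Q ^ k *ᵥ z)) + osc (α • (Q ^ (k + 1) *ᵥ x)) := osc_add_le _ _
        _ ≤ (1 - α) * osc (Q ^ k *ᵥ z) + α * osc (Q ^ (k + 1) *ᵥ x) :=
          add_le_add (osc_smul_le (sub_nonneg.2 hα1) _) (osc_smul_le hα0 _)
        _ ≤ (1 - α) * osc z + α * osc (Q ^ (k + 1) *ᵥ x) := by
          gcongr
          exact osc_mulVec_le_osc (pow_mem hQ k) z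
    have hαk : α ^ k ≤ 1 := pow_le_one₀ hα0 hα1
    have hz : 0 ≤ (1 - α) * osc z := mul_nonneg (sub_nonneg.2 hα1) (osc_nonneg z)
    calc osc x ≤ (1 - α) * k * osc z + α ^ k * osc (Q ^ k *ᵥ x) := ih
      _ ≤ (1 - α) * k * osc z + α ^ k * ((1 - α) * osc z + α * osc (Q ^ (k + 1) *ᵥ x)) := by
          gcongr
      _ ≤ (1 - α) * ↑(k + 1) * osc z + α ^ (k + 1) * osc (Q ^ (k + 1) *ᵥ x) := by
          rw [pow_succ α k]
          push_cast
          nlinarith [mul_le_mul_of_nonneg_right hαk hz]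

lemma osc_abelMean_le [Nonempty n] (hQ : Q ∈ rowStochastic ℝ n) (hα0 : 0 ≤ α) (hα1 : α < 1)
    {m : ℕ} {c : ℝ} (hc : c < 1) (hcontr : ∀ v : n → ℝ, osc (Q ^ m *ᵥ v) ≤ c * osc v)
    (z : n → ℝ) : osc (abelMean Q α z) ≤ (1 - α) * (m * osc z / (1 - c)) := by
  set x := abelMean Q α z
  have hiter := osc_le_of_eq_add_smul_mulVec hQ hα0 hα1.le (abelMean_eq hQ hα0 hα1 z) m
  have htail : α ^ m * osc (Q ^ m *ᵥ x) ≤ c * osc x :=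
    (mul_le_of_le_one_left (osc_nonneg _) (pow_le_one₀ hα0 hα1.le)).trans (hcontr x)
  rw [← mul_div_assoc, le_div_iff₀ (sub_pos.2 hc)]
  linarith

theorem tendsto_abelMean (hQ : Q ∈ rowStochastic ℝ n) (hprim : ∃ m, ∀ i j, 0 < (Q ^ m) i j)
    {w : n → ℝ} (hw : w ᵥ* Q = w) (hw0 : ∀ j, 0 ≤ w j) (hw1 : ∑ j, w j = 1)
    (z : n → ℝ) (i : n) :
    Tendsto (fun α => abelMean Q α z i) (𝓝[<] 1) (𝓝 (w ⬝ᵥ z)) := by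
  have : Nonempty n := ⟨i⟩
  obtain ⟨m, hm⟩ := hprim
  obtain ⟨c, hc, hcontr⟩ := exists_osc_pow_mulVec_le hQ hm
  set K := m * osc z / (1 - c)
  have hbound : ∀ᶠ α in 𝓝[<] 1, ‖abelMean Q α z i - w ⬝ᵥ z‖ ≤ (1 - α) * K := by
    filter_upwards [Ioo_mem_nhdsLT zero_lt_one] with α ⟨hα0, hα1⟩
    rw [Real.norm_eq_abs, ← dotProduct_abelMean hQ hα0.le hα1 hw z]
    exact (abs_sub_dotProduct_le_osc hw0 hw1 _ i).trans
      (osc_abelMean_le hQ hα0.le hα1 hc hcontr z)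
  have hK : Tendsto (fun α : ℝ => (1 - α) * K) (𝓝[<] 1) (𝓝 0) :=
    ((by fun_prop : Continuous fun α : ℝ => (1 - α) * K).tendsto' 1 0 (by simp)).mono_left
      nhdsWithin_le_nhds
  exact tendsto_iff_norm_sub_tendsto_zero.2
    (squeeze_zero' (Eventually.of_forall fun _ => norm_nonneg _) hbound hK)

end AbelMean

lemma inv_one_sub_smul_conj {n : Type*} [Fintype n] [DecidableEq n] {E E' : Matrix n n ℝ}
    (h : E * E' = 1) (A : Matrix n n ℝ) (α : ℝ) :
    (1 - α • (E * A * E'))⁻¹ = E * (1 - α • A)⁻¹ * E' := by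
  have hfactor : 1 - α • (E * A * E') = E * (1 - α • A) * E' := by
    rw [Matrix.mul_sub, Matrix.sub_mul, Matrix.mul_one, h, Matrix.mul_smul, Matrix.smul_mul]
  rw [hfactor, Matrix.mul_inv_rev, Matrix.mul_inv_rev, inv_eq_left_inv h,
    inv_eq_left_inv (mul_eq_one_comm.1 h), Matrix.mul_assoc]

section DegreeNormalization

variable {n : Type*} [Fintype n] [DecidableEq n] {W : Matrix n n ℝ} {d : n → ℝ}

lemma diagonal_inv_mul_mem_rowStochastic (hW : ∀ i j, 0 ≤ W i j)
    (hd : ∀ i, d i = ∑ j, W i j) (hdpos : ∀ i, 0 < d i) :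
    diagonal (fun i => (d i)⁻¹) * W ∈ rowStochastic ℝ n := by
  refine mem_rowStochastic_iff_sum.2 ⟨fun i j => ?_, fun i => ?_⟩
  · rw [diagonal_mul]
    exact mul_nonneg (inv_nonneg.2 (hdpos i).le) (hW i j)
  · simp_rw [diagonal_mul, ← Finset.mul_sum, ← hd i]
    exact inv_mul_cancel₀ (hdpos i).ne'

lemma vecMul_diagonal_inv_mul (hWsym : W.IsSymm) (hd : ∀ i, d i = ∑ j, W i j)
    (hd0 : ∀ i, d i ≠ 0) : d ᵥ* (diagonal (fun i => (d i)⁻¹) * W) = d := by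
  funext j
  simp only [vecMul, dotProduct, diagonal_mul, ← mul_assoc, mul_inv_cancel₀ (hd0 _), one_mul]
  rw [hd j]
  exact Finset.sum_congr rfl fun i _ => hWsym.apply j i

lemma diagonal_rpow_mul_mul_diagonal_rpow (hdpos : ∀ i, 0 < d i) (σ : ℝ) :
    diagonal (fun i => d i ^ (-σ)) * W * diagonal (fun i => d i ^ (σ - 1)) =
      diagonal (fun i => d i ^ (1 - σ)) * (diagonal (fun i => (d i)⁻¹) * W) *
        diagonal (fun i => d i ^ (σ - 1)) := by
  rw [← Matrix.mul_assoc (diagonal _), diagonal_mul_diagonal]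
  congr 3
  funext i
  rw [← Real.rpow_neg_one, ← Real.rpow_add (hdpos i)]
  ring_nf

lemma inv_one_sub_smul_diagonal_rpow_conj (hdpos : ∀ i, 0 < d i) (σ α : ℝ) :
    (1 - α • (diagonal (fun i => d i ^ (-σ)) * W * diagonal (fun i => d i ^ (σ - 1))))⁻¹ =
      diagonal (fun i => d i ^ (1 - σ)) * (1 - α • (diagonal (fun i => (d i)⁻¹) * W))⁻¹ *
        diagonal (fun i => d i ^ (σ - 1)) := by
  rw [diagonal_rpow_mul_mul_diagonal_rpow hdpos σ]
  refine inv_one_sub_smul_conj ?_ _ α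
  rw [diagonal_mul_diagonal, ← diagonal_one]
  congr 1
  funext i
  rw [← Real.rpow_add (hdpos i), sub_add_sub_cancel', sub_self, Real.rpow_zero]

end DegreeNormalization

lemma sum_filter_eq_one {n : Type*} [Fintype n] {y : n → ℝ} (hy : ∀ j, y j = 0 ∨ y j = 1)
    (f : n → ℝ) : ∑ j ∈ univ.filter (fun j => y j = 1), f j = ∑ j, f j * y j := by
  rw [Finset.sum_filter]
  refine Finset.sum_congr rfl fun j _ => ?_
  rcases hy j with h | h <;> simp [h]

/-- As `α → 1⁻`, the generalized classification function
`F_{·k}(α) = (1−α)(I − α D^{−σ} W D^{σ−1})⁻¹ Y_{·k}` converges componentwise to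
`d_i^{1−σ} (1ᵀD1)⁻¹ ∑_{j : Y_{jk}=1} d_j^σ`; consequently the limiting classification of
every node is determined by the class `k` maximizing `∑_{j labeled k} d_j^σ`. -/
theorem limiting_classification
    (N K : ℕ) (W : Matrix (Fin N) (Fin N) ℝ)
    (hWsym : W.IsSymm) (hWnonneg : ∀ i j, 0 ≤ W i j)
    (d : Fin N → ℝ) (hd : ∀ i, d i = ∑ j, W i j) (hdpos : ∀ i, 0 < d i)
    (hprim : ∃ m : ℕ, ∀ i j,
      0 < ((Matrix.diagonal (fun i => (d i)⁻¹) * W) ^ m) i j)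
    (σ : ℝ) (Y : Matrix (Fin N) (Fin K) ℝ)
    (hY : ∀ j k, Y j k = 0 ∨ Y j k = 1)
    (F : Fin K → ℝ → (Fin N → ℝ))
    (hF : ∀ k α, F k α = (1 - α) • ((1 - α • (Matrix.diagonal (fun i => d i ^ (-σ)) * W *
        Matrix.diagonal (fun i => d i ^ (σ - 1))))⁻¹ *ᵥ (fun j => Y j k)))
    (S : Fin K → ℝ)
    (hS : ∀ k, S k = ∑ j ∈ Finset.univ.filter (fun j => Y j k = 1), d j ^ σ) :
    (∀ k i, Tendsto (fun α : ℝ => F k α i) (𝓝[<] (1 : ℝ))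
      (𝓝 (d i ^ (1 - σ) * (∑ j, d j)⁻¹ * S k)))
    ∧ (∀ i (k₁ k₂ : Fin K),
        d i ^ (1 - σ) * (∑ j, d j)⁻¹ * S k₁ < d i ^ (1 - σ) * (∑ j, d j)⁻¹ * S k₂
        ↔ S k₁ < S k₂) := by
  have hT (i : Fin N) : 0 < ∑ j, d j := Finset.sum_pos (fun j _ => hdpos j) ⟨i, mem_univ i⟩
  refine ⟨fun k i => ?_, fun i k₁ k₂ => ?_⟩
  · set P := diagonal (fun i => (d i)⁻¹) * W
    set π := (∑ j, d j)⁻¹ • d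
    set z : Fin N → ℝ := fun j => d j ^ (σ - 1) * Y j k
    have hπ : π ᵥ* P = π := by
      rw [smul_vecMul, vecMul_diagonal_inv_mul hWsym hd fun i => (hdpos i).ne']
    have hπ1 : ∑ j, π j = 1 := by simp [π, ← Finset.mul_sum, (hT i).ne']
    have hF' : ∀ α, F k α i = d i ^ (1 - σ) * abelMean P α z i := fun α => by
      have hz : diagonal (fun j => d j ^ (σ - 1)) *ᵥ (fun j => Y j k) = z :=
        funext fun j => mulVec_diagonal _ _ _
      rw [hF, inv_one_sub_smul_diagonal_rpow_conj hdpos, ← mulVec_mulVec, ← mulVec_mulVec, hz,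
        abelMean, Pi.smul_apply, Pi.smul_apply, mulVec_diagonal, smul_eq_mul, smul_eq_mul]
      ring
    have hπz : π ⬝ᵥ z = (∑ j, d j)⁻¹ * S k := by
      rw [hS, sum_filter_eq_one (fun j => hY j k), Finset.mul_sum]
      refine Finset.sum_congr rfl fun j _ => ?_
      simp only [π, z, Pi.smul_apply, smul_eq_mul, Real.rpow_sub_one (hdpos j).ne']
      field_simp [(hdpos j).ne']
    have hπ0 : ∀ j, 0 ≤ π j := fun j => smul_nonneg (inv_nonneg.2 (hT i).le) (hdpos j).le
    have hlim := (tendsto_abelMean (diagonal_inv_mul_mem_rowStochastic hWnonneg hd hdpos) hprim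
      hπ hπ0 hπ1 z i).const_mul (d i ^ (1 - σ))
    simpa only [hF', hπz, mul_assoc] using hlim
  · exact mul_lt_mul_iff_right₀
      (mul_pos (Real.rpow_pos_of_pos (hdpos i) _) (inv_pos.2 (hT i)))
end

section
/- In the PageRank-based method (σ = 0), if the labeling columns are normalized so that Y_{·k}^T 1 is the same for all classes k, then the limit as α → 1⁻ of the classification function (1−α)(I − α W D^{−1})^{−1} Y_{·k} equals (1^T D 1)^{−1} (Y_{·k}^T 1) · D 1, which is the same vector for all k; hence no class dominates in the limit. -/
/-!
`M = W D⁻¹` satisfies `1ᵀ M = 1ᵀ` (by symmetry of `W`) and `M d = d`, and primitivity of the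
random walk `D⁻¹ W` makes `1` a simple eigenvalue of `M`. With the spectral projection
`Π = d 1ᵀ / 1ᵀd`, the deflated matrix `I - α (M - Π)` stays invertible at `α = 1`, and
`(1 - α) (I - α M)⁻¹ = (1 - α) (I - α (M - Π))⁻¹ + α Π` tends to `Π` as `α → 1`.
Finally `Π Y_{·k} = c d / 1ᵀd` for every class `k`.
-/

open Matrix Finset Filter Topology

namespace Matrix

section AbelLimit

variable {n 𝕜 : Type*} [Fintype n] [DecidableEq n] [Field 𝕜]
  {M : Matrix n n 𝕜} {p u : n → 𝕜}

lemma one_sub_smul_mul_vecMulVec (hMp : M *ᵥ p = p) (α : 𝕜) :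
    (1 - α • M) * vecMulVec p u = (1 - α) • vecMulVec p u := by
  rw [Matrix.sub_mul, Matrix.one_mul, Matrix.smul_mul, mul_vecMulVec, hMp, sub_smul, one_smul]

lemma vecMulVec_mul_one_sub_smul_deflation (huM : u ᵥ* M = u) (hup : u ⬝ᵥ p = 1) (α : 𝕜) :
    vecMulVec p u * (1 - α • (M - vecMulVec p u)) = vecMulVec p u := by
  rw [Matrix.mul_sub, Matrix.mul_one, Matrix.mul_smul, Matrix.mul_sub, vecMulVec_mul, huM,
    vecMulVec_mul_vecMulVec, hup, one_smul, sub_self, smul_zero, sub_zero]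

lemma vecMul_one_sub_deflation (huM : u ᵥ* M = u) (hup : u ⬝ᵥ p = 1) :
    u ᵥ* (1 - (M - vecMulVec p u)) = u := by
  rw [vecMul_sub, vecMul_sub, vecMul_one, huM, vecMul_vecMulVec, hup, one_smul, sub_self,
    sub_zero]

lemma isUnit_det_one_sub_deflation (huM : u ᵥ* M = u) (hup : u ⬝ᵥ p = 1)
    (hsimple : ∀ v, M *ᵥ v = v → u ⬝ᵥ v = 0 → v = 0) :
    IsUnit (1 - (M - vecMulVec p u)).det := by
  rw [isUnit_iff_ne_zero]
  intro hdet
  obtain ⟨v, hv0, hv⟩ := exists_mulVec_eq_zero_iff.mpr hdet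
  have huv : u ⬝ᵥ v = 0 := by
    rw [← vecMul_one_sub_deflation (p := p) huM hup, ← dotProduct_mulVec, hv, dotProduct_zero]
  have hMv : M *ᵥ v = v := by
    rw [sub_mulVec, sub_mulVec, one_mulVec, vecMulVec_mulVec, huv] at hv
    simpa [sub_eq_zero, eq_comm] using hv
  exact hv0 (hsimple v hMv huv)

/-- Deflating the simple eigenvalue `1` splits the Abel-weighted resolvent into a part that
stays bounded near `α = 1` and the spectral projection. -/
lemma sub_smul_inv_one_sub_smul_eq (huM : u ᵥ* M = u) (hMp : M *ᵥ p = p) (hup : u ⬝ᵥ p = 1)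
    {α : 𝕜} (hα : α ≠ 1) (hC : IsUnit (1 - α • (M - vecMulVec p u)).det) :
    (1 - α) • (1 - α • M)⁻¹ = (1 - α) • (1 - α • (M - vecMulVec p u))⁻¹ + α • vecMulVec p u := by
  have hEC := vecMulVec_mul_one_sub_smul_deflation huM hup α
  have hME := one_sub_smul_mul_vecMulVec (u := u) hMp α
  set C := 1 - α • (M - vecMulVec p u)
  set E := vecMulVec p u
  have h1α : (1 - α) ≠ 0 := sub_ne_zero.mpr hα.symm
  replace hEC : E * C⁻¹ = E := by
    conv_lhs => rw [← hEC]
    exact mul_nonsing_inv_cancel_right _ _ hC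
  have hsplit : 1 - α • M = C - α • E := by
    simp only [C, smul_sub]
    abel
  have hinv : (1 - α • M)⁻¹ = C⁻¹ + (α / (1 - α)) • E := by
    refine inv_eq_right_inv ?_
    rw [Matrix.mul_add, Matrix.mul_smul, hME, smul_smul,
      div_mul_cancel₀ _ h1α, hsplit, Matrix.sub_mul, mul_nonsing_inv _ hC, Matrix.smul_mul, hEC,
      sub_add_cancel]
  rw [hinv, smul_add, smul_smul, mul_div_cancel₀ _ h1α]

variable [TopologicalSpace 𝕜] [IsTopologicalDivisionRing 𝕜] [T1Space 𝕜]

theorem tendsto_sub_smul_inv_one_sub_smul (huM : u ᵥ* M = u) (hMp : M *ᵥ p = p)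
    (hup : u ⬝ᵥ p = 1) (hsimple : ∀ v, M *ᵥ v = v → u ⬝ᵥ v = 0 → v = 0) :
    Tendsto (fun α : 𝕜 => (1 - α) • (1 - α • M)⁻¹) (𝓝[≠] 1) (𝓝 (vecMulVec p u)) := by
  set C : 𝕜 → Matrix n n 𝕜 := fun α => 1 - α • (M - vecMulVec p u)
  have hC1 : IsUnit (C 1).det := by
    simpa only [C, one_smul] using isUnit_det_one_sub_deflation huM hup hsimple
  have hCcont : Continuous C := by fun_prop
  have hCinv : Tendsto (fun α => (C α)⁻¹) (𝓝 1) (𝓝 (C 1)⁻¹) := by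
    refine (continuousAt_matrix_inv _ ?_).tendsto.comp (hCcont.tendsto' 1 (C 1) rfl)
    rw [Ring.inverse_eq_inv']
    exact continuousAt_inv₀ hC1.ne_zero
  have hE : Tendsto (fun α : 𝕜 => (1 - α) • (C α)⁻¹ + α • vecMulVec p u) (𝓝 1)
      (𝓝 ((1 - 1 : 𝕜) • (C 1)⁻¹ + (1 : 𝕜) • vecMulVec p u)) :=
    ((tendsto_const_nhds.sub tendsto_id).smul hCinv).add (tendsto_id.smul tendsto_const_nhds)
  rw [sub_self, zero_smul, zero_add, one_smul] at hE
  have hCev : ∀ᶠ α in 𝓝 (1 : 𝕜), IsUnit (C α).det :=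
    ((hCcont.matrix_det.tendsto 1).eventually_ne hC1.ne_zero).mono fun _ => Ne.isUnit
  refine (hE.mono_left nhdsWithin_le_nhds).congr' ?_
  filter_upwards [nhdsWithin_le_nhds hCev, self_mem_nhdsWithin] with α hCα hα
  exact (sub_smul_inv_one_sub_smul_eq huM hMp hup hα hCα).symm

theorem tendsto_sub_smul_inv_one_sub_smul_mulVec (huM : u ᵥ* M = u) (hMp : M *ᵥ p = p)
    (hup : u ⬝ᵥ p = 1) (hsimple : ∀ v, M *ᵥ v = v → u ⬝ᵥ v = 0 → v = 0) (y : n → 𝕜) :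
    Tendsto (fun α : 𝕜 => (1 - α) • ((1 - α • M)⁻¹ *ᵥ y)) (𝓝[≠] 1) (𝓝 ((u ⬝ᵥ y) • p)) := by
  have hcont : Continuous fun A : Matrix n n 𝕜 => A *ᵥ y :=
    continuous_id.matrix_mulVec continuous_const
  have h := (hcont.tendsto _).comp (tendsto_sub_smul_inv_one_sub_smul huM hMp hup hsimple)
  simpa only [Function.comp_def, smul_mulVec, vecMulVec_mulVec, op_smul_eq_smul] using h

end AbelLimit

section MaximumPrinciple

variable {n : Type*} [Fintype n]

lemma pow_mulVec_eq_self {R : Type*} [Semiring R] [DecidableEq n] {A : Matrix n n R} {x : n → R}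
    (hx : A *ᵥ x = x) (k : ℕ) : (A ^ k) *ᵥ x = x := by
  induction k with
  | zero => rw [pow_zero, one_mulVec]
  | succ k ih => rw [pow_succ, ← mulVec_mulVec, hx, ih]

/-- Maximum principle: at a maximum of `x`, the average `Q *ᵥ x` can only equal `x` if every
entry it averages over is maximal too. -/
lemma apply_eq_of_mulVec_eq_self_of_pos {Q : Matrix n n ℝ} (hQ : ∀ i j, 0 < Q i j)
    (hQ1 : Q *ᵥ 1 = 1) {x : n → ℝ} (hx : Q *ᵥ x = x) (i j : n) : x i = x j := by
  obtain ⟨i₀, -, hmax⟩ := exists_max_image univ x ⟨i, mem_univ i⟩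
  have hgap : ∑ l, Q i₀ l * (x i₀ - x l) = 0 := by
    have h1 := congrFun hQ1 i₀
    have hx₀ := congrFun hx i₀
    simp only [mulVec, dotProduct, Pi.one_apply, mul_one] at h1 hx₀
    simp only [mul_sub, sum_sub_distrib, ← sum_mul, h1, one_mul, hx₀, sub_self]
  have hmax_eq : ∀ l, x l = x i₀ := fun l => by
    have hterm := (sum_eq_zero_iff_of_nonneg fun l _ =>
      mul_nonneg (hQ i₀ l).le (sub_nonneg.mpr (hmax l (mem_univ l)))).mp hgap l (mem_univ l)
    have := (mul_eq_zero.mp hterm).resolve_left (hQ i₀ l).ne'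
    linarith
  rw [hmax_eq i, hmax_eq j]

end MaximumPrinciple

end Matrix

section RandomWalk

variable {n : Type*} [Fintype n] [DecidableEq n] {W : Matrix n n ℝ} {d : n → ℝ}

lemma diagonal_inv_mulVec_self (hd : ∀ i, d i ≠ 0) : diagonal d⁻¹ *ᵥ d = 1 :=
  funext fun i => by rw [mulVec_diagonal, Pi.inv_apply, inv_mul_cancel₀ (hd i), Pi.one_apply]

lemma mul_diagonal_inv_mulVec_self (hW1 : W *ᵥ 1 = d) (hd : ∀ i, d i ≠ 0) :
    (W * diagonal d⁻¹) *ᵥ d = d := by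
  rw [← mulVec_mulVec, diagonal_inv_mulVec_self hd, hW1]

lemma one_vecMul_mul_diagonal_inv (hW : W.IsSymm) (hW1 : W *ᵥ 1 = d) (hd : ∀ i, d i ≠ 0) :
    1 ᵥ* (W * diagonal d⁻¹) = 1 := by
  rw [← vecMul_vecMul, ← hW.eq, vecMul_transpose, hW1]
  exact funext fun i => by rw [vecMul_diagonal, Pi.inv_apply, mul_inv_cancel₀ (hd i), Pi.one_apply]

/-- `W D⁻¹ = D (D⁻¹ W) D⁻¹`, so the fixed vectors of `W D⁻¹` are `D` times those of the
random walk `D⁻¹ W`, which are constant by primitivity. -/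
lemma eq_zero_of_mul_diagonal_inv_mulVec_eq_self (hW1 : W *ᵥ 1 = d) (hd : ∀ i, 0 < d i)
    (hprim : ∃ m : ℕ, ∀ i j, 0 < ((diagonal d⁻¹ * W) ^ m) i j) {v : n → ℝ}
    (hv : (W * diagonal d⁻¹) *ᵥ v = v) (hsum : ∑ i, v i = 0) : v = 0 := by
  obtain ⟨m, hm⟩ := hprim
  obtain ⟨x, hx⟩ : ∃ x, x = diagonal d⁻¹ *ᵥ v := ⟨_, rfl⟩
  have hPx : (diagonal d⁻¹ * W) *ᵥ x = x := by
    rw [hx, mulVec_mulVec, Matrix.mul_assoc, ← mulVec_mulVec, hv]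
  have hP1 : (diagonal d⁻¹ * W) *ᵥ 1 = 1 := by
    rw [← mulVec_mulVec, hW1, diagonal_inv_mulVec_self fun i => (hd i).ne']
  have hconst := apply_eq_of_mulVec_eq_self_of_pos hm (pow_mulVec_eq_self hP1 m)
    (pow_mulVec_eq_self hPx m)
  have hvx : ∀ i, v i = d i * x i := fun i => by
    rw [hx, mulVec_diagonal, Pi.inv_apply, mul_inv_cancel_left₀ (hd i).ne']
  funext i
  have hS : 0 < ∑ j, d j := sum_pos (fun j _ => hd j) ⟨i, mem_univ i⟩
  have : x i * ∑ j, d j = 0 := by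
    rw [← hsum, mul_sum]
    exact sum_congr rfl fun j _ => by rw [hvx j, hconst j i, mul_comm]
  rw [Pi.zero_apply, hvx i, (mul_eq_zero.mp this).resolve_right hS.ne', mul_zero]

end RandomWalk

theorem pagerank_no_dominating_class_general
    (N K : ℕ) (W : Matrix (Fin N) (Fin N) ℝ)
    (hWsym : W.IsSymm)
    (d : Fin N → ℝ) (hd : ∀ i, d i = ∑ j, W i j) (hdpos : ∀ i, 0 < d i)
    (hprim : ∃ m : ℕ, ∀ i j,
      0 < ((Matrix.diagonal (fun i => (d i)⁻¹) * W) ^ m) i j)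
    (Y : Matrix (Fin N) (Fin K) ℝ)
    (c : ℝ) (hYsum : ∀ k, ∑ i, Y i k = c) :
    ∀ (k : Fin K) (i : Fin N),
      Tendsto (fun α : ℝ =>
          ((1 - α) • ((1 - α • (W * Matrix.diagonal (fun i => (d i)⁻¹)))⁻¹ *ᵥ
            (fun j => Y j k))) i)
        (𝓝[<] (1 : ℝ)) (𝓝 ((∑ j, d j)⁻¹ * c * d i)) := by
  intro k i
  have hW1 : W *ᵥ 1 = d := funext fun j => by
    simp only [mulVec, dotProduct, Pi.one_apply, mul_one, hd]
  have hd0 : ∀ j, d j ≠ 0 := fun j => (hdpos j).ne'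
  have hS : 0 < ∑ j, d j := sum_pos (fun j _ => hdpos j) ⟨i, mem_univ i⟩
  have hlim := tendsto_sub_smul_inv_one_sub_smul_mulVec (p := (∑ j, d j)⁻¹ • d)
    (one_vecMul_mul_diagonal_inv hWsym hW1 hd0)
    (by rw [mulVec_smul, mul_diagonal_inv_mulVec_self hW1 hd0])
    (by rw [dotProduct_smul, one_dotProduct, smul_eq_mul, inv_mul_cancel₀ hS.ne'])
    (fun v hv hv1 => eq_zero_of_mul_diagonal_inv_mulVec_eq_self hW1 hdpos hprim hv
      (by rwa [one_dotProduct] at hv1)) (fun j => Y j k)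
  have hvalue : (∑ j, d j)⁻¹ * c * d i = ((1 ⬝ᵥ fun j => Y j k) • (∑ j, d j)⁻¹ • d) i := by
    rw [one_dotProduct, hYsum, Pi.smul_apply, Pi.smul_apply, smul_eq_mul, smul_eq_mul]
    ring
  rw [hvalue]
  exact (tendsto_pi_nhds.mp hlim i).mono_left (nhdsLT_le_nhdsNE 1)

/-- In the PageRank-based method (`σ = 0`), if the labeling columns are
normalized so that `Y_{·k}ᵀ1 = c` for all classes `k`, then as `α → 1⁻` the classification
function `(1−α)(I − α W D⁻¹)⁻¹ Y_{·k}` converges (componentwise) to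
`(1ᵀD1)⁻¹ c · D1`, the same vector for all `k`; hence no class dominates in the limit. -/
theorem pagerank_no_dominating_class
    (N K : ℕ) (W : Matrix (Fin N) (Fin N) ℝ)
    (hWsym : W.IsSymm) (hWnonneg : ∀ i j, 0 ≤ W i j)
    (d : Fin N → ℝ) (hd : ∀ i, d i = ∑ j, W i j) (hdpos : ∀ i, 0 < d i)
    (hprim : ∃ m : ℕ, ∀ i j,
      0 < ((Matrix.diagonal (fun i => (d i)⁻¹) * W) ^ m) i j)
    (Y : Matrix (Fin N) (Fin K) ℝ) (hYnonneg : ∀ i k, 0 ≤ Y i k)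
    (c : ℝ) (hYsum : ∀ k, ∑ i, Y i k = c) :
    ∀ (k : Fin K) (i : Fin N),
      Tendsto (fun α : ℝ =>
          ((1 - α) • ((1 - α • (W * Matrix.diagonal (fun i => (d i)⁻¹)))⁻¹ *ᵥ
            (fun j => Y j k))) i)
        (𝓝[<] (1 : ℝ)) (𝓝 ((∑ j, d j)⁻¹ * c * d i)) :=
  pagerank_no_dominating_class_general N K W hWsym d hd hdpos hprim Y c hYsum
end
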